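/- arXiv:1611.06500 — 5 statements merged into one kernel-verified Lean document; each statement's English description precedes it below -/
import Mathlib

section
/- Let G = (V,E) be an undirected graph, let F_1, …, F_m be a maximal spanning forest decomposition (msfd) of order m of G, let k be an integer with 1 ≤ k ≤ m, and let G_k = (V, F_1 ∪ … ∪ F_k). Then for every nonempty proper subset S ⊂ V with λ(S,G) ≥ k, one has λ(S,G_k) ≥ k. -/
/-- The size of the edge cut `E_G(S, V∖S)`: the number of edges of `G` with one
endpoint in `S` and the other in `Sᶜ`. -/
noncomputable def cutSize {V : Type*} (G : SimpleGraph V) (S : Set V) : ℕ :=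
  {e ∈ G.edgeSet | ∃ u ∈ S, ∃ v ∈ Sᶜ, e = s(u, v)}.ncard

/-- `F` is a maximal spanning forest of `H`: a subforest of `H` such that the endpoints of
every edge of `H` lie in the same component of `F`. -/
def IsMaxSpanningForest {V : Type*} (H F : SimpleGraph V) : Prop :=
  F ≤ H ∧ F.IsAcyclic ∧ ∀ u v : V, H.Adj u v → F.Reachable u v

/-- `F 1, …, F m` is a maximal spanning forest decomposition of order `m` of `G`:
the forests are edge-disjoint, their union is `G`, and each `F i` is a maximal spanning
forest of `G \ (F 1 ∪ … ∪ F (i-1))`. -/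
def IsMSFD {V : Type*} (G : SimpleGraph V) (m : ℕ) (F : ℕ → SimpleGraph V) : Prop :=
  (⨆ i ∈ Finset.Icc 1 m, F i) = G ∧
  (∀ i ∈ Finset.Icc 1 m, ∀ j ∈ Finset.Icc 1 m, i ≠ j → Disjoint (F i) (F j)) ∧
  ∀ i ∈ Finset.Icc 1 m, IsMaxSpanningForest (G \ ⨆ j ∈ Finset.Icc 1 (i - 1), F j) (F i)

/-- If `F 1, …, F m` is an msfd of order `m` of `G`, `1 ≤ k ≤ m` and
`G_k = F 1 ∪ … ∪ F k`, then every nonempty proper subset `S` with `λ(S,G) ≥ k`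
satisfies `λ(S,G_k) ≥ k`. -/
theorem msfd_cut_ge {V : Type*} [Fintype V] (G : SimpleGraph V) (m : ℕ)
    (F : ℕ → SimpleGraph V) (hF : IsMSFD G m F) (k : ℕ) (hk1 : 1 ≤ k) (hkm : k ≤ m)
    (S : Set V) (hS : S.Nonempty) (hS' : Sᶜ.Nonempty)
    (hcut : k ≤ cutSize G S) :
    k ≤ cutSize (⨆ i ∈ Finset.Icc 1 k, F i) S := by
  classical
  obtain ⟨hUnion, hDisj, hMax⟩ := hF
  set Gk : SimpleGraph V := ⨆ i ∈ Finset.Icc 1 k, F i with hGk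
  set T : Set (Sym2 V) := {e ∈ Gk.edgeSet | ∃ u ∈ S, ∃ v ∈ Sᶜ, e = s(u, v)} with hT
  have hTfin : T.Finite := Set.toFinite T
  have hFleGk : ∀ i ∈ Finset.Icc 1 k, F i ≤ Gk := by
    intro i hi
    exact le_iSup₂ (f := fun i (_ : i ∈ Finset.Icc 1 k) => F i) i hi
  have hGkleG : Gk ≤ G := by
    rw [← hUnion]
    apply iSup₂_le
    intro i hi
    refine le_iSup₂ (f := fun i (_ : i ∈ Finset.Icc 1 m) => F i) i ?_
    simp only [Finset.mem_Icc] at hi ⊢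
    omega
  show k ≤ T.ncard
  by_cases hcase : ∃ u ∈ S, ∃ v ∈ Sᶜ, G.Adj u v ∧ ¬ Gk.Adj u v
  · -- each F i, 1 ≤ i ≤ k, contains a cut edge
    obtain ⟨u, hu, v, hv, huv, hnuv⟩ := hcase
    have key : ∀ i, ∃ e, i ∈ Finset.Icc 1 k → e ∈ (F i).edgeSet ∧ e ∈ T := by
      intro i
      by_cases hi : i ∈ Finset.Icc 1 k
      · have him : i ∈ Finset.Icc 1 m := by
          simp only [Finset.mem_Icc] at hi ⊢; omega
        obtain ⟨hle, hac, hreach⟩ := hMax i him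
        have hBle : (⨆ j ∈ Finset.Icc 1 (i - 1), F j) ≤ Gk := by
          apply iSup₂_le
          intro j hj
          refine le_iSup₂ (f := fun j (_ : j ∈ Finset.Icc 1 k) => F j) j ?_
          simp only [Finset.mem_Icc] at hj hi ⊢
          omega
        have hadj : (G \ ⨆ j ∈ Finset.Icc 1 (i - 1), F j).Adj u v := by
          rw [SimpleGraph.sdiff_adj]
          exact ⟨huv, fun h => hnuv (hBle h)⟩
        obtain ⟨w⟩ := hreach u v hadj
        obtain ⟨d, _, hdS, hdS'⟩ := w.exists_boundary_dart S hu hv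
        refine ⟨s(d.toProd.1, d.toProd.2), fun _ => ⟨d.adj, ?_, d.toProd.1, hdS, d.toProd.2, hdS', rfl⟩⟩
        exact hFleGk i hi d.adj
      · exact ⟨s(u, v), fun h => absurd h hi⟩
    choose f hf using key
    have hmaps : ∀ i ∈ (Finset.Icc 1 k : Set ℕ), f i ∈ T := by
      intro i hi
      exact (hf i hi).2
    have hinj : Set.InjOn f (Finset.Icc 1 k : Set ℕ) := by
      intro i hi j hj hij
      by_contra hne
      have him : i ∈ Finset.Icc 1 m := by
        simp only [Finset.mem_Icc, Finset.coe_Icc, Set.mem_Icc] at hi ⊢; omega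
      have hjm : j ∈ Finset.Icc 1 m := by
        simp only [Finset.mem_Icc, Finset.coe_Icc, Set.mem_Icc] at hj ⊢; omega
      have hd := SimpleGraph.disjoint_edgeSet.mpr (hDisj i him j hjm hne)
      have h1 := (hf i hi).1
      have h2 := (hf j hj).1
      rw [hij] at h1
      exact (Set.disjoint_left.mp hd h1) h2
    calc k = (Finset.Icc 1 k).card := by rw [Nat.card_Icc]; omega
      _ = ((Finset.Icc 1 k : Set ℕ)).ncard := (Set.ncard_coe_finset _).symm
      _ = (f '' (Finset.Icc 1 k : Set ℕ)).ncard := (Set.ncard_image_of_injOn hinj).symm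
      _ ≤ T.ncard := Set.ncard_le_ncard (by rintro e ⟨i, hi, rfl⟩; exact hmaps i hi) hTfin
  · -- all cut edges of G are in Gk
    push_neg at hcase
    refine le_trans hcut (Set.ncard_le_ncard ?_ hTfin)
    rintro e ⟨he, u, hu, v, hv, rfl⟩
    have hGadj : G.Adj u v := he
    refine ⟨?_, u, hu, v, hv, rfl⟩
    exact hcase u hu v hv hGadj
end

section
/- Let G = (V,E) be an undirected graph, let F_1, …, F_m be a maximal spanning forest decomposition (msfd) of order m of G, let k be an integer with 1 ≤ k ≤ m, and let G_k = (V, F_1 ∪ … ∪ F_k). Then for every nonempty proper subset S ⊂ V with λ(S,G) ≤ k−1, one has λ(S,G_k) = λ(S,G). -/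
/-- If `F 1, …, F m` is an msfd of order `m` of `G`, `1 ≤ k ≤ m` and
`G_k = F 1 ∪ … ∪ F k`, then every nonempty proper subset `S` with `λ(S,G) ≤ k - 1`
satisfies `λ(S,G_k) = λ(S,G)`. -/
theorem msfd_cut_eq {V : Type*} [Fintype V] (G : SimpleGraph V) (m : ℕ)
    (F : ℕ → SimpleGraph V) (hF : IsMSFD G m F) (k : ℕ) (hk1 : 1 ≤ k) (hkm : k ≤ m)
    (S : Set V) (hS : S.Nonempty) (hS' : Sᶜ.Nonempty)
    (hcut : cutSize G S ≤ k - 1) :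
    cutSize (⨆ i ∈ Finset.Icc 1 k, F i) S = cutSize G S := by
  classical
  obtain ⟨hunion, hdisj, hmax⟩ := hF
  have hsub : Finset.Icc 1 k ⊆ Finset.Icc 1 m := Finset.Icc_subset_Icc le_rfl hkm
  have hFleG : ∀ i ∈ Finset.Icc 1 k, F i ≤ G := by
    intro i hi
    rw [← hunion]
    exact le_iSup₂_of_le i (hsub hi) le_rfl
  have hle : (⨆ i ∈ Finset.Icc 1 k, F i) ≤ G := iSup₂_le hFleG
  suffices h : {e ∈ (⨆ i ∈ Finset.Icc 1 k, F i).edgeSet |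
      ∃ u ∈ S, ∃ v ∈ Sᶜ, e = s(u, v)} = {e ∈ G.edgeSet | ∃ u ∈ S, ∃ v ∈ Sᶜ, e = s(u, v)} by
    rw [cutSize, cutSize, h]
  apply Set.Subset.antisymm
  · rintro e ⟨he, hex⟩
    exact ⟨SimpleGraph.edgeSet_mono hle he, hex⟩
  · rintro e ⟨he, u, hu, v, hv, rfl⟩
    refine ⟨?_, u, hu, v, hv, rfl⟩
    by_contra hne
    rw [SimpleGraph.mem_edgeSet] at he hne
    have hnadj : ∀ i ∈ Finset.Icc 1 k, ¬ (F i).Adj u v := by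
      intro i hi hadj
      exact hne (by simp only [SimpleGraph.iSup_adj]; exact ⟨i, ⟨hi, hadj⟩⟩)
    have hreach : ∀ i ∈ Finset.Icc 1 k, (F i).Reachable u v := by
      intro i hi
      refine (hmax i (hsub hi)).2.2 u v ?_
      rw [SimpleGraph.sdiff_adj]
      refine ⟨he, ?_⟩
      simp only [SimpleGraph.iSup_adj]
      rintro ⟨j, hj, hadj⟩
      rw [Finset.mem_Icc] at hj hi
      exact hnadj j (Finset.mem_Icc.mpr ⟨hj.1, hj.2.trans (Nat.sub_le_of_le_add (by omega))⟩) hadj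
    have key : ∀ i ∈ Finset.Icc 1 k, ∃ a b, a ∈ S ∧ b ∈ Sᶜ ∧ (F i).Adj a b := by
      intro i hi
      obtain ⟨p⟩ := hreach i hi
      obtain ⟨d, _, hdS, hdS'⟩ := p.exists_boundary_dart S hu hv
      exact ⟨d.fst, d.snd, hdS, hdS', d.adj⟩
    choose a b ha hb hadj using key
    set cutset := {e ∈ G.edgeSet | ∃ u ∈ S, ∃ v ∈ Sᶜ, e = s(u, v)} with hcs
    let f : ℕ → Sym2 V := fun i =>
      if h : i ∈ Finset.Icc 1 k then s(a i h, b i h) else s(u, v)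
    have hmaps : ∀ i ∈ (Finset.Icc 0 k : Finset ℕ), f i ∈ cutset := by
      intro i _
      by_cases hik : i ∈ Finset.Icc 1 k
      · simp only [f, dif_pos hik]
        exact ⟨(hFleG i hik) (hadj i hik), a i hik, ha i hik, b i hik, hb i hik, rfl⟩
      · simp only [f, dif_neg hik]
        exact ⟨he, u, hu, v, hv, rfl⟩
    have hinjF : ∀ i (hi : i ∈ Finset.Icc 1 k), f i ∈ (F i).edgeSet := by
      intro i hi
      simp only [f, dif_pos hi]
      exact hadj i hi
    have hinj : Set.InjOn f ↑(Finset.Icc 0 k) := by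
      intro i hi j hj hij
      by_contra hijne
      -- wlog: handle the cases
      have hdis : ∀ p q, p ∈ Finset.Icc 1 k → q ∈ Finset.Icc 1 k → p ≠ q → f p ≠ f q := by
        intro p q hp hq hpq heq
        have h1 := hinjF p hp
        have h2 := hinjF q hq
        rw [heq] at h1
        have hbot := hdisj p (hsub hp) q (hsub hq) hpq
        rw [disjoint_iff] at hbot
        have hmem : f q ∈ ((F p) ⊓ (F q)).edgeSet := by
          rw [SimpleGraph.edgeSet_inf]; exact ⟨h1, h2⟩
        rw [hbot] at hmem
        simp at hmem
      have hzero : ∀ p, p ∈ Finset.Icc 1 k → f p ≠ s(u, v) := by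
        intro p hp heq
        have h1 := hinjF p hp
        rw [heq, SimpleGraph.mem_edgeSet] at h1
        exact hnadj p hp h1
      by_cases hik : i ∈ Finset.Icc 1 k
      · by_cases hjk : j ∈ Finset.Icc 1 k
        · exact hdis i j hik hjk hijne hij
        · have : f j = s(u, v) := by simp only [f, dif_neg hjk]
          exact hzero i hik (hij.trans this)
      · by_cases hjk : j ∈ Finset.Icc 1 k
        · have : f i = s(u, v) := by simp only [f, dif_neg hik]
          exact hzero j hjk (hij.symm.trans this)
        · -- both outside Icc 1 k but inside Icc 0 k: both are 0
          simp only [Finset.mem_Icc, Finset.coe_Icc, Set.mem_Icc] at hi hj hik hjk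
          omega
    have hfin : cutset.Finite := Set.toFinite _
    have hcard : (Finset.Icc 0 k).card ≤ cutset.ncard := by
      calc (Finset.Icc 0 k).card = (↑(Finset.Icc 0 k) : Set ℕ).ncard := by
            rw [Set.ncard_coe_finset]
        _ = (f '' ↑(Finset.Icc 0 k)).ncard := (Set.ncard_image_of_injOn hinj).symm
        _ ≤ cutset.ncard := Set.ncard_le_ncard (by rintro x ⟨i, hi, rfl⟩; exact hmaps i hi) hfin
    rw [Nat.card_Icc] at hcard
    rw [cutSize, ← hcs] at hcut
    omega
end

section
/- Let G = (V,E) be an undirected graph on n vertices, let F_1, …, F_m be a maximal spanning forest decomposition (msfd) of order m of G, let k be an integer with 1 ≤ k ≤ m, and let G_k = (V, F_1 ∪ … ∪ F_k). Then G_k is a sparse k-connectivity certificate of G; that is, (1) G_k has at most k(n−1) edges, and (2) for every nonempty proper subset S ⊂ V with λ(S,G) ≤ k, every edge of E_G(S, V∖S) belongs to G_k. -/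
/-!
A forest on `n` vertices has at most `n - 1` edges: extend it to a spanning tree of the complete
graph. So `G_k`, a union of `k` forests, has at most `k (n - 1)` edges.

If an edge `uv` of the cut `(S, Sᶜ)` were missing from `G_k`, it would survive in every
`G \ (F 1 ∪ … ∪ F (i-1))` with `i ≤ k`, so by maximality each `F i` joins `u` to `v` and hence
contains an edge of the cut. These `k` edges are distinct because the forests are edge-disjoint,
and none of them is `uv`, so the cut has more than `k` edges.
-/

lemma Finset.card_le_ncard_biUnion {ι α : Type*} [Finite α] {s : Finset ι} {A : ι → Set α}
    (hne : ∀ i ∈ s, (A i).Nonempty) (hdisj : (s : Set ι).PairwiseDisjoint A) :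
    s.card ≤ (⋃ i ∈ s, A i).ncard := by
  have hsum := s.finite_toSet.ncard_biUnion (fun _ _ ↦ Set.toFinite _) hdisj
  rw [finsum_mem_coe_finset] at hsum
  simp only [Finset.mem_coe] at hsum
  rw [hsum, Finset.card_eq_sum_ones]
  exact Finset.sum_le_sum fun i hi ↦ (hne i hi).ncard_pos

namespace SimpleGraph

variable {V : Type*}

theorem IsAcyclic.ncard_edgeSet_le [Fintype V] {F : SimpleGraph V} (hF : F.IsAcyclic) :
    F.edgeSet.ncard ≤ Fintype.card V - 1 := by
  classical
  cases isEmpty_or_nonempty V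
  · simp [Set.eq_empty_of_isEmpty F.edgeSet]
  obtain ⟨T, hFT, -, hT⟩ := connected_top.exists_isTree_le_of_le_of_isAcyclic le_top hF
  calc F.edgeSet.ncard ≤ T.edgeSet.ncard := Set.ncard_le_ncard (edgeSet_mono hFT)
    _ = Fintype.card V - 1 := by
      rw [Set.ncard_eq_toFinset_card', Set.toFinset_card, ← edgeFinset_card, ← hT.card_edgeFinset]
      rfl

theorem ncard_edgeSet_biSup_le {ι : Type*} (s : Finset ι) (F : ι → SimpleGraph V) :
    (⨆ i ∈ s, F i).edgeSet.ncard ≤ ∑ i ∈ s, (F i).edgeSet.ncard := by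
  simpa only [edgeSet_iSup] using s.set_ncard_biUnion_le fun i ↦ (F i).edgeSet

def cutEdgeSet (G : SimpleGraph V) (S : Set V) : Set (Sym2 V) :=
  {e ∈ G.edgeSet | ∃ u ∈ S, ∃ v ∈ Sᶜ, e = s(u, v)}

variable {G H : SimpleGraph V} {S : Set V}

theorem cutSize_eq_ncard_cutEdgeSet : cutSize G S = (G.cutEdgeSet S).ncard := rfl

theorem cutEdgeSet_subset_edgeSet : G.cutEdgeSet S ⊆ G.edgeSet := fun _ he ↦ he.1

theorem cutEdgeSet_mono (h : G ≤ H) : G.cutEdgeSet S ⊆ H.cutEdgeSet S :=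
  fun _ ⟨he, hcross⟩ ↦ ⟨edgeSet_mono h he, hcross⟩

theorem cutEdgeSet_biSup {ι : Type*} (s : Finset ι) (F : ι → SimpleGraph V) :
    (⨆ i ∈ s, F i).cutEdgeSet S = ⋃ i ∈ s, (F i).cutEdgeSet S := by
  ext e
  simp only [cutEdgeSet, edgeSet_iSup, Set.mem_iUnion, Set.mem_ofPred_eq]
  tauto

theorem Reachable.cutEdgeSet_nonempty {u v : V} (h : G.Reachable u v) (hu : u ∈ S) (hv : v ∉ S) :
    (G.cutEdgeSet S).Nonempty := by
  obtain ⟨p⟩ := h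
  obtain ⟨d, hd, hdS, hdS'⟩ := p.exists_boundary_dart S hu hv
  exact ⟨d.edge, p.edges_subset_edgeSet (List.mem_map_of_mem hd), d.fst, hdS, d.snd, hdS', rfl⟩

end SimpleGraph

namespace IsMSFD

open SimpleGraph

variable {V : Type*} {G : SimpleGraph V} {m k : ℕ} {F : ℕ → SimpleGraph V}

theorem le (hF : IsMSFD G m F) {i : ℕ} (hi : i ∈ Finset.Icc 1 m) : F i ≤ G :=
  hF.1 ▸ le_biSup F hi

theorem isAcyclic (hF : IsMSFD G m F) {i : ℕ} (hi : i ∈ Finset.Icc 1 m) : (F i).IsAcyclic :=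
  (hF.2.2 i hi).2.1

theorem ncard_edgeSet_le [Fintype V] (hF : IsMSFD G m F) (hkm : k ≤ m) :
    (⨆ i ∈ Finset.Icc 1 k, F i).edgeSet.ncard ≤ k * (Fintype.card V - 1) := by
  calc (⨆ i ∈ Finset.Icc 1 k, F i).edgeSet.ncard
      ≤ ∑ i ∈ Finset.Icc 1 k, (F i).edgeSet.ncard := ncard_edgeSet_biSup_le _ F
    _ ≤ ∑ _i ∈ Finset.Icc 1 k, (Fintype.card V - 1) := Finset.sum_le_sum fun i hi ↦
        (hF.isAcyclic (Finset.Icc_subset_Icc_right hkm hi)).ncard_edgeSet_le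
    _ = k * (Fintype.card V - 1) := by simp

theorem reachable_of_adj_of_not_adj (hF : IsMSFD G m F) (hkm : k ≤ m) {u v : V} (huv : G.Adj u v)
    (hk : ¬ (⨆ i ∈ Finset.Icc 1 k, F i).Adj u v) {i : ℕ} (hi : i ∈ Finset.Icc 1 k) :
    (F i).Reachable u v := by
  refine (hF.2.2 i (Finset.Icc_subset_Icc_right hkm hi)).2.2 u v ⟨huv, fun hpre ↦ hk ?_⟩
  have hprefix : Finset.Icc 1 (i - 1) ⊆ Finset.Icc 1 k :=
    Finset.Icc_subset_Icc_right (by have := (Finset.mem_Icc.mp hi).2; omega)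
  have hle : (⨆ j ∈ Finset.Icc 1 (i - 1), F j) ≤ ⨆ j ∈ Finset.Icc 1 k, F j :=
    biSup_mono fun j hj ↦ hprefix hj
  exact hle hpre

theorem mem_edgeSet_of_cutSize_le [Finite V] (hF : IsMSFD G m F) (hkm : k ≤ m) {S : Set V}
    (hcut : cutSize G S ≤ k) {e : Sym2 V} (he : e ∈ G.cutEdgeSet S) :
    e ∈ (⨆ i ∈ Finset.Icc 1 k, F i).edgeSet := by
  by_contra hnot
  obtain ⟨u, hu, v, hv, rfl⟩ := he.2
  have hsub : Finset.Icc 1 k ⊆ Finset.Icc 1 m := Finset.Icc_subset_Icc_right hkm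
  have hcross : ∀ i ∈ Finset.Icc 1 k, ((F i).cutEdgeSet S).Nonempty := fun i hi ↦
    (hF.reachable_of_adj_of_not_adj hkm he.1 hnot hi).cutEdgeSet_nonempty hu hv
  have hdisj : (↑(Finset.Icc 1 k) : Set ℕ).PairwiseDisjoint fun i ↦ (F i).cutEdgeSet S :=
    fun i hi j hj hij ↦ ((disjoint_edgeSet.mpr (hF.2.1 i (hsub hi) j (hsub hj) hij)).mono
      cutEdgeSet_subset_edgeSet cutEdgeSet_subset_edgeSet)
  have hk : k ≤ ((⨆ i ∈ Finset.Icc 1 k, F i).cutEdgeSet S).ncard := by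
    rw [cutEdgeSet_biSup]
    simpa using Finset.card_le_ncard_biUnion hcross hdisj
  have hle : (⨆ i ∈ Finset.Icc 1 k, F i) ≤ G := iSup₂_le fun i hi ↦ hF.le (hsub hi)
  have hlt : (⨆ i ∈ Finset.Icc 1 k, F i).cutEdgeSet S ⊂ G.cutEdgeSet S :=
    Set.ssubset_iff_exists.mpr ⟨cutEdgeSet_mono hle, s(u, v), he,
      fun h ↦ hnot (cutEdgeSet_subset_edgeSet h)⟩
  rw [cutSize_eq_ncard_cutEdgeSet] at hcut
  exact (hk.trans_lt (Set.ncard_lt_ncard hlt)).not_ge hcut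

end IsMSFD

theorem msfd_sparse_certificate_general {V : Type*} [Fintype V] (G : SimpleGraph V) (m : ℕ)
    (F : ℕ → SimpleGraph V) (hF : IsMSFD G m F) (k : ℕ) (hkm : k ≤ m) :
    (⨆ i ∈ Finset.Icc 1 k, F i).edgeSet.ncard ≤ k * (Fintype.card V - 1) ∧
    ∀ S : Set V, S.Nonempty → Sᶜ.Nonempty → cutSize G S ≤ k →
      ∀ e ∈ G.edgeSet, (∃ u ∈ S, ∃ v ∈ Sᶜ, e = s(u, v)) →
        e ∈ (⨆ i ∈ Finset.Icc 1 k, F i).edgeSet :=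
  ⟨hF.ncard_edgeSet_le hkm, fun _ _ _ hcut _ he hcross ↦
    hF.mem_edgeSet_of_cutSize_le hkm hcut ⟨he, hcross⟩⟩

/-- If `F 1, …, F m` is an msfd of order `m` of `G` on `n` vertices, `1 ≤ k ≤ m` and
`G_k = F 1 ∪ … ∪ F k`, then `G_k` is a sparse `k`-connectivity certificate of `G`:
(1) `G_k` has at most `k(n-1)` edges, and (2) for every nonempty proper subset `S`
with `λ(S,G) ≤ k`, every edge of `G` crossing `(S, Sᶜ)` is an edge of `G_k`. -/
theorem msfd_sparse_certificate {V : Type*} [Fintype V] (G : SimpleGraph V) (m : ℕ)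
    (F : ℕ → SimpleGraph V) (hF : IsMSFD G m F) (k : ℕ) (hk1 : 1 ≤ k) (hkm : k ≤ m) :
    (⨆ i ∈ Finset.Icc 1 k, F i).edgeSet.ncard ≤ k * (Fintype.card V - 1) ∧
    ∀ S : Set V, S.Nonempty → Sᶜ.Nonempty → cutSize G S ≤ k →
      ∀ e ∈ G.edgeSet, (∃ u ∈ S, ∃ v ∈ Sᶜ, e = s(u, v)) →
        e ∈ (⨆ i ∈ Finset.Icc 1 k, F i).edgeSet :=
  msfd_sparse_certificate_general G m F hF k hkm
end

section
/- Let F_1, …, F_m be a maximal spanning forest decomposition (msfd) of order m of an undirected graph G = (V,E). Then for every edge (u,v) ∈ F_j and every integer i with 1 ≤ i ≤ j, the graph G_i = (V, F_1 ∪ … ∪ F_i) contains at least i pairwise edge-disjoint paths between u and v, i.e., λ(u,v,G_i) ≥ i. -/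
/-- If `F 1, …, F m` is an msfd of order `m` of `G`, then for every edge `(u,v)` of `F j`
and every `i` with `1 ≤ i ≤ j`, the graph `G_i = F 1 ∪ … ∪ F i` contains at least `i`
pairwise edge-disjoint paths between `u` and `v`, i.e. `λ(u,v,G_i) ≥ i`. -/
theorem msfd_local_connectivity {V : Type*} [Fintype V] (G : SimpleGraph V) (m : ℕ)
    (F : ℕ → SimpleGraph V) (hF : IsMSFD G m F) (j : ℕ) (hj : j ∈ Finset.Icc 1 m)
    (u v : V) (huv : (F j).Adj u v) (i : ℕ) (hi1 : 1 ≤ i) (hij : i ≤ j) :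
    ∃ P : Fin i → (⨆ l ∈ Finset.Icc 1 i, F l).Walk u v,
      (∀ a, (P a).IsPath) ∧ ∀ a b, a ≠ b → List.Disjoint (P a).edges (P b).edges := by
  classical
  obtain ⟨hsup, hdisj, hmax⟩ := hF
  have hjm := Finset.mem_Icc.mp hj
  have hGuv : G.Adj u v := by
    rw [← hsup]
    exact (le_iSup₂ (f := fun k _ => F k) j hj) huv
  have hreach : ∀ l ∈ Finset.Icc 1 i, (F l).Reachable u v := by
    intro l hl
    rw [Finset.mem_Icc] at hl
    by_cases hlj : l = j
    · exact (hlj ▸ huv).reachable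
    · have hlj' : l < j := lt_of_le_of_ne (hl.2.trans hij) hlj
      have hlm : l ∈ Finset.Icc 1 m := Finset.mem_Icc.2 ⟨hl.1, hlj'.le.trans hjm.2⟩
      refine (hmax l hlm).2.2 u v ?_
      rw [SimpleGraph.sdiff_adj]
      refine ⟨hGuv, ?_⟩
      intro hadj
      rw [SimpleGraph.iSup_adj] at hadj
      obtain ⟨k, hadj⟩ := hadj
      rw [SimpleGraph.iSup_adj] at hadj
      obtain ⟨hk, hadj⟩ := hadj
      rw [Finset.mem_Icc] at hk
      have hkj : k ≠ j := by omega
      have hkm : k ∈ Finset.Icc 1 m := Finset.mem_Icc.2 ⟨hk.1, by omega⟩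
      have hd := hdisj k hkm j hj hkj
      have : (F k ⊓ F j).Adj u v := ⟨hadj, huv⟩
      rw [disjoint_iff.mp hd] at this
      exact this.elim
  have hmem : ∀ a : Fin i, a.1 + 1 ∈ Finset.Icc 1 i :=
    fun a => Finset.mem_Icc.2 ⟨Nat.le_add_left 1 a.1, a.2⟩
  let p : ∀ a : Fin i, (F (a.1 + 1)).Path u v :=
    fun a => ((hreach _ (hmem a)).some).toPath
  have hedges : ∀ a : Fin i, ∀ e ∈ (p a).1.edges, e ∈ (F (a.1 + 1)).edgeSet :=
    fun a e he => (p a).1.edges_subset_edgeSet he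
  have hle : ∀ a : Fin i, ∀ e ∈ (p a).1.edges,
      e ∈ (⨆ l ∈ Finset.Icc 1 i, F l).edgeSet := by
    intro a e he
    exact SimpleGraph.edgeSet_mono (le_iSup₂ (f := fun k _ => F k) _ (hmem a)) (hedges a e he)
  refine ⟨fun a => (p a).1.transfer _ (hle a), ?_, ?_⟩
  · intro a
    exact ((p a).2).transfer (hle a)
  · intro a b hab
    rw [SimpleGraph.Walk.edges_transfer, SimpleGraph.Walk.edges_transfer]
    intro e hea heb
    have h1 := hedges a e hea
    have h2 := hedges b e heb
    have hab' : a.1 + 1 ≠ b.1 + 1 := fun h => hab (Fin.ext (Nat.succ_injective h))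
    have ham : a.1 + 1 ∈ Finset.Icc 1 m := Finset.mem_Icc.2 ⟨Nat.le_add_left 1 a.1, by have := a.2; omega⟩
    have hbm : b.1 + 1 ∈ Finset.Icc 1 m := Finset.mem_Icc.2 ⟨Nat.le_add_left 1 b.1, by have := b.2; omega⟩
    have hd := hdisj _ ham _ hbm hab'
    exact (Set.disjoint_left.mp (SimpleGraph.disjoint_edgeSet.mpr hd) h1) h2
end

section
/- There exists a constant C > 0 such that the following holds. Let G = (V,E) be a connected undirected graph on n ≥ 2 vertices, let ε ∈ (0,1], let k = 48·(log n)/ε², and let each edge e of G be assigned an independent weight p_e uniformly distributed on [0,1]. For a real p > 0, let G(p) denote the subgraph of G consisting of all edges of weight at most p. If k/(4·λ(G)) ≤ p ≤ k/(2·λ(G)), then with probability at least 1 − C/n⁴ the edge connectivity of G(p) satisfies λ(G(p)) ≤ k. -/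
open MeasureTheory

/-- The edge connectivity of `G`: the minimum of `λ(S,G)` over all nonempty proper
subsets `S ⊂ V`. -/
noncomputable def edgeConn {V : Type*} (G : SimpleGraph V) : ℕ :=
  sInf {c : ℕ | ∃ S : Set V, S.Nonempty ∧ Sᶜ.Nonempty ∧ cutSize G S = c}

/-- The product over all potential edges of the uniform probability measure on `[0,1]`:
the law of i.i.d. uniform labels `ω e ∈ [0,1]`, one per unordered pair of vertices.
Thresholding these labels at `p` realizes the inclusion of each edge independently with
probability `p`. -/
noncomputable def edgeLabelMeasure (V : Type) [Fintype V] [DecidableEq V] :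
    Measure (Sym2 V → ℝ) :=
  Measure.pi fun _ => volume.restrict (Set.Icc 0 1)

/-- The random subgraph `G(p)` of `G` determined by the labels `ω`: an edge `e` of `G`
is included exactly when `ω e ≤ p`, which happens with probability `p` independently
over the edges. -/
def sampledGraph {V : Type} (G : SimpleGraph V) (ω : Sym2 V → ℝ) (p : ℝ) :
    SimpleGraph V :=
  SimpleGraph.fromEdgeSet {e | e ∈ G.edgeSet ∧ ω e ≤ p}

open Finset Real Set ProbabilityTheory
open scoped ENNReal

/-! Fix a minimum cut `S` of `G`. Then `λ(G(p)) ≤ N`, the number of the `λ(G)` cut edges of `S`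
whose label is at most `p`. The labels are independent, so `E[2^N] = (1 + p)^λ(G) ≤ e^(pλ(G))
≤ e^(k/2)`, and Markov's inequality gives `P(N ≥ k) ≤ e^(k/2) 2^(-k) ≤ e^(-k/12) ≤ n^(-4)`
because `k ≥ 48 log n`. -/

section CutEdges

variable {V : Type*}

def cutEdges (G : SimpleGraph V) (S : Set V) : Set (Sym2 V) :=
  {e ∈ G.edgeSet | ∃ u ∈ S, ∃ v ∈ Sᶜ, e = s(u, v)}

theorem cutSize_eq_ncard_cutEdges (G : SimpleGraph V) (S : Set V) :
    cutSize G S = (cutEdges G S).ncard :=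
  rfl

theorem edgeConn_le_cutSize (G : SimpleGraph V) {S : Set V} (hS : S.Nonempty)
    (hSc : Sᶜ.Nonempty) : edgeConn G ≤ cutSize G S :=
  Nat.sInf_le ⟨S, hS, hSc, rfl⟩

theorem exists_cutSize_eq_edgeConn [Nontrivial V] (G : SimpleGraph V) :
    ∃ S : Set V, S.Nonempty ∧ Sᶜ.Nonempty ∧ cutSize G S = edgeConn G := by
  obtain ⟨v, w, hvw⟩ := exists_pair_ne V
  exact Nat.sInf_mem (s := {c | ∃ S : Set V, S.Nonempty ∧ Sᶜ.Nonempty ∧ cutSize G S = c})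
    ⟨_, {v}, singleton_nonempty v, ⟨w, hvw.symm⟩, rfl⟩

theorem cutEdges_sampledGraph {V : Type} (G : SimpleGraph V) (ω : Sym2 V → ℝ) (p : ℝ)
    (S : Set V) : cutEdges (sampledGraph G ω p) S = {e ∈ cutEdges G S | ω e ≤ p} := by
  ext e
  simp only [cutEdges, sampledGraph, SimpleGraph.edgeSet_fromEdgeSet, mem_sdiff, mem_ofPred_eq]
  constructor
  · rintro ⟨⟨⟨heG, hep⟩, -⟩, hcut⟩
    exact ⟨⟨heG, hcut⟩, hep⟩
  · rintro ⟨⟨heG, u, hu, v, hv, rfl⟩, hep⟩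
    refine ⟨⟨⟨heG, hep⟩, ?_⟩, u, hu, v, hv, rfl⟩
    rintro (rfl : u = v)
    exact hv hu

theorem cutSize_sampledGraph {V : Type} [Finite V] (G : SimpleGraph V) (ω : Sym2 V → ℝ)
    (p : ℝ) (S : Set V) :
    cutSize (sampledGraph G ω p) S = #{e ∈ (toFinite (cutEdges G S)).toFinset | ω e ≤ p} := by
  rw [cutSize_eq_ncard_cutEdges, cutEdges_sampledGraph, ← ncard_coe_finset, coe_filter]
  simp only [Finite.mem_toFinset]

end CutEdges

section Chernoff

variable {ι : Type*} (ν : Measure ℝ) (D : Finset ι) (p : ℝ)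

theorem two_pow_card_filter_eq_prod (ω : ι → ℝ) :
    (2 : ℝ≥0∞) ^ #{i ∈ D | ω i ≤ p} = ∏ i ∈ D, if ω i ≤ p then 2 else 1 := by
  rw [← prod_filter, prod_const]

theorem lintegral_ite_le_two_one [IsProbabilityMeasure ν] :
    ∫⁻ x, (if x ≤ p then 2 else 1) ∂ν = 1 + ν (Iic p) := by
  have h : (fun x : ℝ => if x ≤ p then (2 : ℝ≥0∞) else 1) =
      fun x => 1 + (Iic p).indicator 1 x := by
    ext x
    by_cases hx : x ≤ p <;> simp [hx, one_add_one_eq_two]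
  rw [h, lintegral_add_left measurable_const, lintegral_const, measure_univ, mul_one,
    lintegral_indicator_one measurableSet_Iic]

theorem measurable_ite_le_two_one : Measurable fun x : ℝ => if x ≤ p then (2 : ℝ≥0∞) else 1 :=
  Measurable.ite measurableSet_Iic measurable_const measurable_const

theorem lintegral_two_pow_card_filter_le [Fintype ι] [IsProbabilityMeasure ν] :
    ∫⁻ ω, 2 ^ #{i ∈ D | ω i ≤ p} ∂Measure.pi (fun _ : ι => ν) = (1 + ν (Iic p)) ^ #D := by
  simp_rw [two_pow_card_filter_eq_prod]
  rw [lintegral_prod_eq_prod_lintegral_of_indepFun D _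
    (iIndepFun_pi fun _ => (measurable_ite_le_two_one p).aemeasurable)
    fun i => (measurable_ite_le_two_one p).comp (measurable_pi_apply i)]
  simp_rw [(measurePreserving_eval (fun _ : ι => ν) _).lintegral_comp
    (measurable_ite_le_two_one p), lintegral_ite_le_two_one, prod_const]

theorem measure_le_card_filter_le [Fintype ι] [IsProbabilityMeasure ν] (t : ℝ) :
    Measure.pi (fun _ : ι => ν) {ω | t ≤ #{i ∈ D | ω i ≤ p}} ≤ (1 + ν (Iic p)) ^ #D / 2 ^ t := by
  have hmeas : Measurable fun ω : ι → ℝ => (2 : ℝ≥0∞) ^ #{i ∈ D | ω i ≤ p} := by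
    simp_rw [two_pow_card_filter_eq_prod]
    exact Finset.measurable_prod D fun i _ =>
      (measurable_ite_le_two_one p).comp (measurable_pi_apply i)
  calc Measure.pi (fun _ : ι => ν) {ω | t ≤ #{i ∈ D | ω i ≤ p}}
      ≤ Measure.pi (fun _ : ι => ν) {ω | 2 ^ t ≤ (2 : ℝ≥0∞) ^ #{i ∈ D | ω i ≤ p}} := by
        refine measure_mono fun ω (h : t ≤ _) => ?_
        rw [mem_ofPred_eq, ← ENNReal.rpow_natCast]
        exact ENNReal.rpow_le_rpow_of_exponent_le one_le_two h
    _ ≤ (∫⁻ ω, 2 ^ #{i ∈ D | ω i ≤ p} ∂Measure.pi (fun _ : ι => ν)) / 2 ^ t :=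
        meas_ge_le_lintegral_div hmeas.aemeasurable
          (ENNReal.rpow_pos two_pos ENNReal.ofNat_ne_top).ne'
          (ENNReal.rpow_ne_top_of_nonneg' two_pos ENNReal.ofNat_ne_top)
    _ = (1 + ν (Iic p)) ^ #D / 2 ^ t := by rw [lintegral_two_pow_card_filter_le]

end Chernoff

instance : IsProbabilityMeasure (volume.restrict (Icc (0 : ℝ) 1)) :=
  ⟨by simp⟩

theorem volume_restrict_Icc_zero_one_Iic_le (p : ℝ) :
    volume.restrict (Icc (0 : ℝ) 1) (Iic p) ≤ ENNReal.ofReal p := by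
  rw [Measure.restrict_apply measurableSet_Iic]
  calc volume (Iic p ∩ Icc 0 1) ≤ volume (Icc 0 p) :=
        measure_mono fun x hx => ⟨hx.2.1, hx.1⟩
    _ = ENNReal.ofReal p := by rw [Real.volume_Icc, sub_zero]

theorem uniformPi_measure_le_card_filter_le {ι : Type*} [Fintype ι] (D : Finset ι) {p : ℝ}
    (hp : 0 ≤ p) (t : ℝ) :
    Measure.pi (fun _ : ι => volume.restrict (Icc (0 : ℝ) 1)) {ω | t ≤ #{i ∈ D | ω i ≤ p}} ≤
      ENNReal.ofReal (exp (p * #D) / 2 ^ t) := by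
  have hmgf : 1 + volume.restrict (Icc (0 : ℝ) 1) (Iic p) ≤ ENNReal.ofReal (exp p) :=
    calc 1 + volume.restrict (Icc (0 : ℝ) 1) (Iic p) ≤ 1 + ENNReal.ofReal p := by
          gcongr
          exact volume_restrict_Icc_zero_one_Iic_le p
      _ = ENNReal.ofReal (p + 1) := by
          rw [ENNReal.ofReal_add hp zero_le_one, ENNReal.ofReal_one, add_comm]
      _ ≤ ENNReal.ofReal (exp p) := ENNReal.ofReal_le_ofReal (add_one_le_exp p)
  calc _ ≤ (1 + volume.restrict (Icc (0 : ℝ) 1) (Iic p)) ^ #D / 2 ^ t :=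
        measure_le_card_filter_le _ D p t
    _ ≤ ENNReal.ofReal (exp p) ^ #D / ENNReal.ofReal (2 ^ t) := by
        rw [← ENNReal.ofReal_rpow_of_pos two_pos, ENNReal.ofReal_ofNat]
        gcongr
    _ = ENNReal.ofReal (exp (p * #D) / 2 ^ t) := by
        rw [← ENNReal.ofReal_pow (exp_nonneg p), ← exp_nat_mul, mul_comm,
          ENNReal.ofReal_div_of_pos (rpow_pos_of_pos two_pos t)]

instance (V : Type) [Fintype V] [DecidableEq V] :
    IsProbabilityMeasure (edgeLabelMeasure V) := by
  unfold edgeLabelMeasure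
  infer_instance

theorem exp_div_two_rpow_le_inv_pow {n a k : ℝ} (hn : 1 ≤ n) (ha : a ≤ k / 2)
    (hk : 48 * log n ≤ k) : exp a / 2 ^ k ≤ 1 / n ^ 4 := by
  have hlog2 : 7 / 12 < log 2 := by linarith [log_two_gt_d9]
  have hlogn : 0 ≤ log n := log_nonneg hn
  have hexp : a - log 2 * k ≤ -(4 * log n) := by nlinarith
  calc exp a / 2 ^ k = exp (a - log 2 * k) := by
        rw [rpow_def_of_pos two_pos, exp_sub]
    _ ≤ exp (-(4 * log n)) := exp_le_exp.mpr hexp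
    _ = 1 / n ^ 4 := by
        rw [exp_neg, show 4 * log n = log (n ^ 4) by rw [log_pow]; norm_num,
          exp_log (by positivity), one_div]

theorem one_sub_le_measure_of_measure_compl_le {α : Type*} [MeasurableSpace α] {μ : Measure α}
    [IsProbabilityMeasure μ] {s : Set α} {δ : ℝ≥0∞} (h : μ sᶜ ≤ δ) : 1 - δ ≤ μ s := by
  rw [tsub_le_iff_right, ← measure_univ (μ := μ)]
  calc μ univ ≤ μ s + μ sᶜ := measure_univ_le_add_compl s
    _ ≤ μ s + δ := by gcongr

/-- There is a constant `C > 0` such that for every connected graph `G` on `n ≥ 2`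
vertices, every `ε ∈ (0,1]`, `k = 48·log n/ε²`, and every `p > 0` with
`k/(4·λ(G)) ≤ p ≤ k/(2·λ(G))`, with probability at least `1 - C/n⁴` the subgraph `G(p)`
(consisting of the edges of weight at most `p` under i.i.d. uniform `[0,1]` edge
weights) has edge connectivity at most `k`. -/
theorem sampled_edgeConn_le :
    ∃ C : ℝ, 0 < C ∧
      ∀ (V : Type) [Fintype V] [DecidableEq V] (G : SimpleGraph V) (ε p : ℝ),
        2 ≤ Fintype.card V → G.Connected → 0 < ε → ε ≤ 1 → 0 < p →
        48 * Real.log (Fintype.card V) / ε ^ 2 / (4 * edgeConn G) ≤ p →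
        p ≤ 48 * Real.log (Fintype.card V) / ε ^ 2 / (2 * edgeConn G) →
        1 - ENNReal.ofReal (C / (Fintype.card V : ℝ) ^ 4) ≤
          edgeLabelMeasure V {ω : Sym2 V → ℝ |
            (edgeConn (sampledGraph G ω p) : ℝ) ≤ 48 * Real.log (Fintype.card V) / ε ^ 2} := by
  refine ⟨1, one_pos, fun V _ _ G ε p hn _ hε hε1 hp _ hpk => ?_⟩
  set n := Fintype.card V
  set k := 48 * log n / ε ^ 2
  have : Nontrivial V := Fintype.one_lt_card_iff_nontrivial.mp hn
  obtain ⟨S, hS, hSc, hSmin⟩ := exists_cutSize_eq_edgeConn G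
  set D := (toFinite (cutEdges G S)).toFinset
  have hD : #D = edgeConn G := by
    rw [← hSmin, cutSize_eq_ncard_cutEdges, ncard_eq_toFinset_card]
  have hk : 48 * log n ≤ k :=
    le_div_self (by positivity) (by positivity) (pow_le_one₀ hε.le hε1)
  have hconn : (0 : ℝ) < edgeConn G := by
    rcases (Nat.cast_nonneg (edgeConn G) : (0 : ℝ) ≤ _).eq_or_lt with h0 | h0
    · rw [← h0, mul_zero, div_zero] at hpk
      linarith
    · exact h0
  have hpD : p * #D ≤ k / 2 := by
    rw [le_div_iff₀ (by positivity)] at hpk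
    rw [hD]
    linarith
  refine one_sub_le_measure_of_measure_compl_le ?_
  calc edgeLabelMeasure V {ω | (edgeConn (sampledGraph G ω p) : ℝ) ≤ k}ᶜ
      ≤ edgeLabelMeasure V {ω | k ≤ #{e ∈ D | ω e ≤ p}} := by
        refine measure_mono fun ω (hω : ¬ _ ≤ k) => ?_
        have h := edgeConn_le_cutSize (sampledGraph G ω p) hS hSc
        rw [cutSize_sampledGraph] at h
        exact (not_le.mp hω).le.trans (mod_cast h)
    _ ≤ ENNReal.ofReal (exp (p * #D) / 2 ^ k) := uniformPi_measure_le_card_filter_le D hp.le k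
    _ ≤ ENNReal.ofReal (1 / n ^ 4) :=
        ENNReal.ofReal_le_ofReal <|
          exp_div_two_rpow_le_inv_pow (mod_cast hn.trans' one_le_two) hpD hk
end
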